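/- Every nonempty compact metric space is the continuous image of the Cantor set. -/
import Mathlib

open Cardinal Set

/-! ### Generalities on `cantorFunction` -/

lemma cf_nonneg {c : ℝ} (hc : 0 ≤ c) (f : ℕ → Bool) : 0 ≤ cantorFunction c f :=
  tsum_nonneg fun _ => cantorFunctionAux_nonneg hc

lemma cf_le {c : ℝ} (hc0 : 0 ≤ c) (hc1 : c < 1) (f : ℕ → Bool) :
    cantorFunction c f ≤ (1 - c)⁻¹ := by
  have h := cantorFunction_le hc0 hc1 (g := fun _ => true) (f := f) (fun n _ => rfl)
  refine h.trans_eq ?_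
  have : cantorFunction c (fun _ => true) = ∑' n : ℕ, c ^ n :=
    tsum_congr fun n => by simp [cantorFunctionAux]
  rw [this, tsum_geometric_of_lt_one hc0 hc1]

lemma cf_continuous {c : ℝ} (hc0 : 0 ≤ c) (hc1 : c < 1) :
    Continuous (cantorFunction c) := by
  apply continuous_tsum (u := fun n => c ^ n)
  · intro n
    show Continuous fun f : ℕ → Bool => cond (f n) (c ^ n) 0
    exact (continuous_of_discreteTopology (f := fun b : Bool => cond b (c ^ n) 0)).comp
      (continuous_apply n)
  · exact summable_geometric_of_lt_one hc0 hc1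
  · intro n f
    rw [Real.norm_eq_abs]
    rcases h : f n with _ | _
    · simp [cantorFunctionAux, h, pow_nonneg hc0]
    · simp [cantorFunctionAux, h, abs_of_nonneg (pow_nonneg hc0 n)]

/-- Surjectivity of the binary expansion onto `[0,2]`. -/
lemma cf_half_surj {r : ℝ} (hr : r ∈ Icc (0:ℝ) 2) :
    ∃ f : ℕ → Bool, cantorFunction (1/2) f = r := by
  set y : ℕ → ℝ := fun n => Nat.rec r (fun _ yn => 2 * (yn - if 1 ≤ yn then 1 else 0)) n with hy
  have hy0 : y 0 = r := rfl
  have hysucc : ∀ n, y (n + 1) = 2 * (y n - if 1 ≤ y n then 1 else 0) := fun n => rfl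
  have hmem : ∀ n, y n ∈ Icc (0:ℝ) 2 := by
    intro n
    induction n with
    | zero => exact hr
    | succ n ih =>
      rw [hysucc]
      rcases le_or_gt 1 (y n) with h | h
      · rw [if_pos h]
        exact ⟨by linarith [ih.1], by linarith [ih.2]⟩
      · rw [if_neg (not_le.2 h)]
        exact ⟨by linarith [ih.1], by linarith⟩
  set f : ℕ → Bool := fun n => decide (1 ≤ y n) with hf
  have key : ∀ n, r = (∑ k ∈ Finset.range n, cantorFunctionAux (1/2) f k) + y n * (1/2) ^ n := by
    intro n
    induction n with
    | zero => simp [hy0]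
    | succ n ih =>
      rw [Finset.sum_range_succ]
      have : cantorFunctionAux (1/2) f n = (if 1 ≤ y n then (1:ℝ) else 0) * (1/2) ^ n := by
        rcases le_or_gt 1 (y n) with h | h
        · rw [if_pos h, cantorFunctionAux_true (by simp [hf, h]), one_mul]
        · rw [if_neg (not_le.2 h), cantorFunctionAux_false (by simp [hf, not_le.2 h]), zero_mul]
      rw [this, hysucc]
      rw [ih]
      ring
  have hsum := (summable_cantor_function (c := 1/2) f (by norm_num) (by norm_num)).hasSum
  have htend := hsum.tendsto_sum_nat
  refine ⟨f, ?_⟩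
  have htend2 : Filter.Tendsto (fun n => ∑ k ∈ Finset.range n, cantorFunctionAux (1/2) f k)
      Filter.atTop (nhds r) := by
    have h0 : Filter.Tendsto (fun n : ℕ => y n * (1/2 : ℝ) ^ n) Filter.atTop (nhds 0) := by
      apply squeeze_zero (fun n => mul_nonneg (hmem n).1 (by positivity))
        (fun n => mul_le_mul_of_nonneg_right (hmem n).2 (by positivity))
      have := tendsto_pow_atTop_nhds_zero_of_lt_one (by norm_num : (0:ℝ) ≤ 1/2) (by norm_num)
      simpa using this.const_mul (2:ℝ)
    have : (fun n => ∑ k ∈ Finset.range n, cantorFunctionAux (1/2) f k)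
        = fun n => r - y n * (1/2) ^ n := by
      ext n
      have := key n
      linarith
    rw [this]
    simpa using tendsto_const_nhds.sub h0
  exact tendsto_nhds_unique htend htend2

/-! ### The ternary map into the Cantor set -/

/-- `tern f = ∑ 2 * f n / 3 ^ (n+1)`. -/
noncomputable def tern (f : ℕ → Bool) : ℝ := (2/3) * cantorFunction (1/3) f

lemma tern_rec (f : ℕ → Bool) :
    tern f = (2 * (bif f 0 then 1 else 0) + tern (fun n => f (n + 1))) / 3 := by
  unfold tern
  rw [cantorFunction_succ f (by norm_num) (by norm_num)]
  ring

lemma tern_nonneg (f : ℕ → Bool) : 0 ≤ tern f :=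
  mul_nonneg (by norm_num) (cf_nonneg (by norm_num) f)

lemma tern_le_one (f : ℕ → Bool) : tern f ≤ 1 := by
  have := cf_le (c := 1/3) (by norm_num) (by norm_num) f
  unfold tern
  rw [show ((1:ℝ) - 1/3)⁻¹ = 3/2 by norm_num] at this
  nlinarith

lemma tern_false {f : ℕ → Bool} (h : f 0 = false) :
    tern f = tern (fun n => f (n + 1)) / 3 := by
  rw [tern_rec, h]
  norm_num

lemma tern_true {f : ℕ → Bool} (h : f 0 = true) :
    tern f = (2 + tern (fun n => f (n + 1))) / 3 := by
  rw [tern_rec, h]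
  norm_num

lemma tern_le_half {f : ℕ → Bool} (h : f 0 = false) : tern f ≤ 1/2 := by
  rw [tern_false h]
  have := tern_le_one (fun n => f (n + 1))
  linarith

lemma half_lt_tern {f : ℕ → Bool} (h : f 0 = true) : 1/2 < tern f := by
  rw [tern_true h]
  have := tern_nonneg (fun n => f (n + 1))
  linarith

lemma preCantorSet_subset_Icc (n : ℕ) : preCantorSet n ⊆ Icc (0:ℝ) 1 := by
  induction n with
  | zero => simp
  | succ n ih =>
    rintro x (⟨y, hy, rfl⟩ | ⟨y, hy, rfl⟩)
    · obtain ⟨h0, h1⟩ := ih hy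
      exact ⟨by linarith, by linarith⟩
    · obtain ⟨h0, h1⟩ := ih hy
      exact ⟨by linarith, by linarith⟩

lemma tern_mem_preCantorSet (n : ℕ) (f : ℕ → Bool) : tern f ∈ preCantorSet n := by
  induction n generalizing f with
  | zero => exact ⟨tern_nonneg f, tern_le_one f⟩
  | succ n ih =>
    rcases h : f 0 with _ | _
    · exact Or.inl ⟨tern (fun n => f (n + 1)), ih _, (tern_false h).symm⟩
    · exact Or.inr ⟨tern (fun n => f (n + 1)), ih _, by rw [tern_true h]⟩

lemma tern_mem_cantorSet (f : ℕ → Bool) : tern f ∈ cantorSet :=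
  Set.mem_iInter.2 fun n => tern_mem_preCantorSet n f

/-! ### Self-similarity of the Cantor set -/

lemma cantorSet_self_left {x : ℝ} (hx : x ∈ cantorSet) (h : x ≤ 1/2) :
    3 * x ∈ cantorSet := by
  rw [cantorSet, Set.mem_iInter] at hx ⊢
  intro n
  rcases hx (n + 1) with ⟨y, hy, rfl⟩ | ⟨y, hy, rfl⟩
  · convert hy using 1
    ring
  · obtain ⟨h0, -⟩ := preCantorSet_subset_Icc n hy
    exfalso
    have : (2 + y) / 3 ≥ 2/3 := by linarith
    linarith

lemma cantorSet_self_right {x : ℝ} (hx : x ∈ cantorSet) (h : 1/2 < x) :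
    3 * x - 2 ∈ cantorSet := by
  rw [cantorSet, Set.mem_iInter] at hx ⊢
  intro n
  rcases hx (n + 1) with ⟨y, hy, rfl⟩ | ⟨y, hy, rfl⟩
  · obtain ⟨-, h1⟩ := preCantorSet_subset_Icc n hy
    exfalso
    have : y / 3 ≤ 1/3 := by linarith
    linarith
  · convert hy using 1
    ring

lemma cantorSet_gap {x : ℝ} (hx : x ∈ cantorSet) : x ≤ 1/2 ↔ x < 2/3 := by
  constructor
  · intro h; linarith
  · intro h
    have h1 : x ∈ preCantorSet 1 := (Set.mem_iInter.1 hx) 1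
    rcases h1 with ⟨y, hy, rfl⟩ | ⟨y, hy, rfl⟩
    · obtain ⟨-, h1⟩ := hy
      simp only [preCantorSet_zero] at *
      linarith
    · obtain ⟨h0, -⟩ := hy
      simp only [preCantorSet_zero] at *
      exfalso
      have : (2 + y) / 3 ≥ 2/3 := by linarith
      linarith

/-! ### The shift map and digits on the Cantor set -/

noncomputable def cantorT' (x : cantorSet) : ℝ :=
  if (x : ℝ) ≤ 1/2 then 3 * x else 3 * x - 2

lemma isClopen_half : IsClopen {x : cantorSet | (x : ℝ) ≤ 1/2} := by
  constructor
  · exact isClosed_le continuous_subtype_val continuous_const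
  · have : {x : cantorSet | (x : ℝ) ≤ 1/2} = Subtype.val ⁻¹' Iio (2/3 : ℝ) := by
      ext x
      exact cantorSet_gap x.2
    rw [this]
    exact isOpen_Iio.preimage continuous_subtype_val

lemma cantorT'_continuous : Continuous cantorT' := by
  apply Continuous.if
  · intro a ha
    rw [isClopen_half.frontier_eq] at ha
    exact absurd ha (Set.notMem_empty a)
  · exact (continuous_const.mul continuous_subtype_val)
  · exact (continuous_const.mul continuous_subtype_val).sub continuous_const

lemma cantorT'_mem (x : cantorSet) : cantorT' x ∈ cantorSet := by
  unfold cantorT'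
  split_ifs with h
  · exact cantorSet_self_left x.2 h
  · exact cantorSet_self_right x.2 (not_le.1 h)

noncomputable def cantorT (x : cantorSet) : cantorSet := ⟨cantorT' x, cantorT'_mem x⟩

lemma cantorT_continuous : Continuous cantorT :=
  cantorT'_continuous.subtype_mk _

noncomputable def cantorD (x : cantorSet) : Bool := if (1/2 : ℝ) < (x : ℝ) then true else false

lemma cantorD_eq_true {x : cantorSet} (h : (1/2:ℝ) < (x : ℝ)) : cantorD x = true := if_pos h

lemma cantorD_eq_false {x : cantorSet} (h : ¬ (1/2:ℝ) < (x : ℝ)) : cantorD x = false := if_neg h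

lemma cantorD_continuous : Continuous cantorD := by
  apply IsLocallyConstant.continuous
  intro s
  have hB : IsOpen {x : cantorSet | (1/2 : ℝ) < (x : ℝ)} :=
    isOpen_lt continuous_const continuous_subtype_val
  have hA : IsOpen {x : cantorSet | (x : ℝ) ≤ 1/2} := isClopen_half.2
  by_cases ht : true ∈ s <;> by_cases hf : false ∈ s
  · have : cantorD ⁻¹' s = Set.univ := by
      ext x
      simp only [mem_preimage, Set.mem_univ, iff_true]
      by_cases hx : (1/2:ℝ) < (x:ℝ)
      · rw [cantorD_eq_true hx]; exact ht
      · rw [cantorD_eq_false hx]; exact hf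
    rw [this]; exact isOpen_univ
  · have : cantorD ⁻¹' s = {x : cantorSet | (1/2 : ℝ) < (x : ℝ)} := by
      ext x
      simp only [mem_preimage, mem_setOf_eq]
      by_cases hx : (1/2:ℝ) < (x:ℝ)
      · rw [cantorD_eq_true hx]; exact iff_of_true ht hx
      · rw [cantorD_eq_false hx]; exact iff_of_false hf hx
    rw [this]; exact hB
  · have : cantorD ⁻¹' s = {x : cantorSet | (x : ℝ) ≤ 1/2} := by
      ext x
      simp only [mem_preimage, mem_setOf_eq]
      by_cases hx : (1/2:ℝ) < (x:ℝ)
      · rw [cantorD_eq_true hx]; exact iff_of_false ht (not_le.2 hx)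
      · rw [cantorD_eq_false hx]; exact iff_of_true hf (le_of_not_gt hx)
    rw [this]; exact hA
  · have : cantorD ⁻¹' s = ∅ := by
      ext x
      simp only [mem_preimage, mem_empty_iff_false, iff_false]
      by_cases hx : (1/2:ℝ) < (x:ℝ)
      · rw [cantorD_eq_true hx]; exact ht
      · rw [cantorD_eq_false hx]; exact hf
    rw [this]; exact isOpen_empty

noncomputable def cantorPsi (x : cantorSet) : ℕ → Bool := fun n => cantorD (cantorT^[n] x)

lemma cantorPsi_continuous : Continuous cantorPsi :=
  continuous_pi fun n => cantorD_continuous.comp (cantorT_continuous.iterate n)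

lemma cantorT_tern (f : ℕ → Bool) :
    cantorT ⟨tern f, tern_mem_cantorSet f⟩ = ⟨tern (fun n => f (n + 1)),
      tern_mem_cantorSet _⟩ := by
  apply Subtype.ext
  show cantorT' _ = _
  unfold cantorT'
  rcases h : f 0 with _ | _
  · rw [if_pos]
    · have := tern_false h
      show 3 * tern f = _
      linarith
    · exact tern_le_half h
  · rw [if_neg]
    · have := tern_true h
      show 3 * tern f - 2 = _
      linarith
    · exact not_le.2 (half_lt_tern h)

lemma cantorT_iterate_tern (n : ℕ) (f : ℕ → Bool) :
    cantorT^[n] ⟨tern f, tern_mem_cantorSet f⟩ =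
      ⟨tern (fun k => f (k + n)), tern_mem_cantorSet _⟩ := by
  induction n generalizing f with
  | zero => simp
  | succ n ih =>
    rw [Function.iterate_succ_apply, cantorT_tern, ih]
    apply Subtype.ext
    apply congrArg tern
    funext k
    exact congrArg f (by omega : k + n + 1 = k + (n + 1))

lemma cantorD_tern (f : ℕ → Bool) :
    cantorD ⟨tern f, tern_mem_cantorSet f⟩ = f 0 := by
  rcases h : f 0 with _ | _
  · exact cantorD_eq_false (not_lt.2 (tern_le_half h))
  · exact cantorD_eq_true (half_lt_tern h)

lemma cantorPsi_surjective : Function.Surjective cantorPsi := by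
  intro f
  refine ⟨⟨tern f, tern_mem_cantorSet f⟩, ?_⟩
  funext n
  show cantorD (cantorT^[n] _) = f n
  rw [cantorT_iterate_tern, cantorD_tern]
  show f (0 + n) = f n
  rw [Nat.zero_add]

/-! ### Continuous surjection from Cantor space onto a compact metric space -/

theorem exists_bool_surjection (X : Type*) [MetricSpace X] [CompactSpace X] [Nonempty X] :
    ∃ f : (ℕ → Bool) → X, Continuous f ∧ Function.Surjective f := by
  obtain ⟨u, hu⟩ := TopologicalSpace.exists_dense_seq X
  set F : X → ℕ → ℝ := fun x n => min 2 (dist x (u n)) with hF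
  have F_cont : Continuous F :=
    continuous_pi fun n => continuous_const.min (continuous_id.dist continuous_const)
  have F_mem : ∀ x n, F x n ∈ Icc (0:ℝ) 2 := fun x n =>
    ⟨le_min (by norm_num) dist_nonneg, min_le_left _ _⟩
  have F_inj : Function.Injective F := by
    intro x y hxy
    by_contra hne
    have hd : 0 < dist x y := dist_pos.2 hne
    set ε := min 2 (dist x y) with hε
    have hε0 : 0 < ε := lt_min (by norm_num) hd
    obtain ⟨n, hn⟩ := hu.exists_dist_lt x (half_pos hε0)
    have hε2 : ε ≤ 2 := min_le_left _ _
    have h1 : F x n = dist x (u n) := min_eq_right (by linarith)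
    have h2 : F y n = dist x (u n) := by rw [← h1, hxy]
    have h3 : dist y (u n) < ε / 2 := by
      by_contra hge
      push_neg at hge
      rcases le_or_gt 2 (dist y (u n)) with h | h
      · have : F y n = 2 := min_eq_left h
        rw [h2] at this
        linarith
      · have : F y n = dist y (u n) := min_eq_right h.le
        rw [h2] at this
        linarith
    have : dist x y ≤ dist x (u n) + dist (u n) y := dist_triangle _ _ _
    rw [dist_comm (u n) y] at this
    have hεd : ε ≤ dist x y := min_le_right _ _
    linarith
  set G : (ℕ → Bool) → ℕ → ℝ := fun g n => cantorFunction (1/2) (fun k => g (Nat.pair n k))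
    with hG
  have G_cont : Continuous G := by
    apply continuous_pi
    intro n
    exact (cf_continuous (by norm_num) (by norm_num)).comp
      (continuous_pi fun k => continuous_apply _)
  have G_surj : ∀ h : ℕ → ℝ, (∀ n, h n ∈ Icc (0:ℝ) 2) → ∃ g, G g = h := by
    intro h hh
    choose b hb using fun n => cf_half_surj (hh n)
    refine ⟨fun m => b m.unpair.1 m.unpair.2, ?_⟩
    funext n
    show cantorFunction (1/2) _ = h n
    rw [← hb n]
    congr 1
    funext k
    simp [Nat.unpair_pair]
  set s : Set (ℕ → Bool) := G ⁻¹' (Set.range F) with hs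
  have s_closed : IsClosed s :=
    ((isCompact_range F_cont).isClosed).preimage G_cont
  have s_ne : s.Nonempty := by
    obtain ⟨x⟩ := ‹Nonempty X›
    obtain ⟨g, hg⟩ := G_surj (F x) (F_mem x)
    refine ⟨g, ?_⟩
    rw [hs, Set.mem_preimage, hg]
    exact Set.mem_range_self x
  obtain ⟨r, -, r_surj, r_cont⟩ :=
    PiNat.exists_retraction_subtype_of_isClosed (E := fun _ => Bool) s_closed s_ne
  set E : X ≃ Set.range F := Equiv.ofInjective F F_inj with hE
  have E_cont : Continuous E := F_cont.subtype_mk _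
  let e : X ≃ₜ Set.range F := E_cont.homeoOfEquivCompactToT2
  set h : s → X := fun z => e.symm ⟨G z.1, z.2⟩ with hh
  have h_cont : Continuous h :=
    e.symm.continuous.comp ((G_cont.comp continuous_subtype_val).subtype_mk _)
  have h_surj : Function.Surjective h := by
    intro x
    obtain ⟨g, hg⟩ := G_surj (F x) (F_mem x)
    have hgs : g ∈ s := by
      rw [hs, Set.mem_preimage, hg]
      exact Set.mem_range_self x
    refine ⟨⟨g, hgs⟩, ?_⟩
    have hval : ((e x : Set.range F) : ℕ → ℝ) = F x := by
      show ((E x : Set.range F) : ℕ → ℝ) = F x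
      rw [hE]
      simp [Equiv.ofInjective_apply]
    have he : e x = ⟨G g, hgs⟩ := Subtype.ext (by rw [hval]; exact hg.symm)
    rw [hh]
    simp only
    rw [← he, Homeomorph.symm_apply_apply]
  exact ⟨h ∘ r, h_cont.comp r_cont, h_surj.comp r_surj⟩

theorem compact_metric_image_of_cantorSet (X : Type*) [MetricSpace X] [CompactSpace X]
    [Nonempty X] : ∃ f : cantorSet → X, Continuous f ∧ Function.Surjective f := by
  obtain ⟨g, g_cont, g_surj⟩ := exists_bool_surjection X
  exact ⟨g ∘ cantorPsi, g_cont.comp cantorPsi_continuous, g_surj.comp cantorPsi_surjective⟩
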